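/- arXiv:1803.04916 — 3 statements merged into one kernel-verified Lean document; each statement's English description precedes it below -/
import Mathlib

section
/- The correction terms sum to zero: ∑_{c ∈ ℤ} δ(c) = 0 (in particular the family (δ(c))_{c ∈ ℤ} is summable). -/
open MeasureTheory ProbabilityTheory
open scoped ENNReal

/-! Write `κ(a, c) = P[V = c | X = a]`, so that `κ(a, c) P[X = a] = P[V = c, X = a]` and
`∑_c κ(a, c) = 1` whenever `P[X = a] > 0`. Summed over all `s' ∈ 𝒮`, including `s`, the bracket
in `δ(c)` vanishes, because both of its terms then add up to `P[V = c]`; so the sum over `s' ≠ s`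
is minus the `s`-term, `P[V = c, Z = s] - ∑_a κ(a, c) P[X = a, Z = s]`. Summing over `c` gives
`P[Z = s] - ∑_a P[X = a, Z = s] = 0`. Every interchange of summation is one of a nonnegative
double series. -/

theorem HasSum.subtype_ne {α β : Type*} [AddCommGroup α] [TopologicalSpace α]
    [IsTopologicalAddGroup α] {f : β → α} {S : α} (h : HasSum f S) (b : β) :
    HasSum (fun x : {x // x ≠ b} => f x) (S - f b) := by
  have hb : HasSum (f ∘ (↑) : ({b} : Set β) → α) (f b) := hasSum_singleton b f
  exact (hb.hasSum_compl_iff (a₂ := S - f b)).mpr (by rwa [add_sub_cancel])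

theorem hasSum_tsum_comm_of_nonneg {β γ : Type*} {f : β → γ → ℝ} {g : β → ℝ} {S : ℝ}
    (hf : ∀ b c, 0 ≤ f b c) (hrow : ∀ b, HasSum (f b) (g b)) (hg : HasSum g S) :
    HasSum (fun c => ∑' b, f b c) S := by
  have hsum : Summable (Function.uncurry f) :=
    (summable_prod_of_nonneg fun p => hf p.1 p.2).mpr
      ⟨fun b => (hrow b).summable, hg.summable.congr fun b => ((hrow b).tsum_eq).symm⟩
  have hS : HasSum (Function.uncurry f) S := by
    convert hsum.hasSum
    rw [hsum.tsum_prod' fun b => (hrow b).summable]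
    exact hg.tsum_eq.symm.trans (tsum_congr fun b => ((hrow b).tsum_eq).symm)
  have hswap := (Equiv.prodComm γ β).hasSum_iff.mpr hS
  exact hswap.prod_fiberwise fun c => (hsum.prod_symm.prod_factor c).hasSum

section Partition

variable {Ω β : Type*} [MeasurableSpace Ω] [MeasurableSpace β] [MeasurableSingletonClass β]
  [Countable β] (μ : Measure Ω) [IsFiniteMeasure μ] {f : Ω → β} {p : Ω → Prop}

theorem hasSum_measureReal_eq_and (hf : Measurable f) (hp : MeasurableSet {ω | p ω}) :
    HasSum (fun b => μ.real {ω | f ω = b ∧ p ω}) (μ.real {ω | p ω}) := by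
  have hdisj : Pairwise (Function.onFun Disjoint fun b => {ω | f ω = b ∧ p ω}) := by
    intro b b' hbb'
    exact Set.disjoint_left.mpr fun ω h h' => hbb' (h.1.symm.trans h'.1)
  have hmeas : ∀ b, MeasurableSet {ω | f ω = b ∧ p ω} :=
    fun b => (hf (measurableSet_singleton b)).inter hp
  have hunion : ⋃ b, {ω | f ω = b ∧ p ω} = {ω | p ω} := by
    ext ω; simp
  have h := measure_iUnion (μ := μ) hdisj hmeas
  rw [hunion] at h
  rw [measureReal_def, h, ENNReal.tsum_toReal_eq fun b => measure_ne_top μ _]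
  exact (ENNReal.summable_toReal (h ▸ measure_ne_top μ _)).hasSum

theorem hasSum_measureReal_and_eq (hf : Measurable f) (hp : MeasurableSet {ω | p ω}) :
    HasSum (fun b => μ.real {ω | p ω ∧ f ω = b}) (μ.real {ω | p ω}) := by
  simpa only [and_comm] using hasSum_measureReal_eq_and μ hf hp

end Partition

section TransitionProb

variable {Ω β γ : Type*} [MeasurableSpace Ω] {μ : Measure Ω} {X : Ω → β} {V : Ω → γ}

variable (μ X V) in
noncomputable def transitionProb (a : β) (c : γ) : ℝ :=
  if 0 < μ.real {ω | X ω = a} then μ.real {ω | V ω = c ∧ X ω = a} / μ.real {ω | X ω = a} else 0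

theorem transitionProb_nonneg (a : β) (c : γ) : 0 ≤ transitionProb μ X V a c := by
  unfold transitionProb
  split_ifs
  exacts [div_nonneg measureReal_nonneg measureReal_nonneg, le_rfl]

variable [IsFiniteMeasure μ]

theorem transitionProb_mul_measureReal (a : β) (c : γ) :
    transitionProb μ X V a c * μ.real {ω | X ω = a} = μ.real {ω | V ω = c ∧ X ω = a} := by
  unfold transitionProb
  split_ifs with hpos
  · exact div_mul_cancel₀ _ hpos.ne'
  · have hnull : μ.real {ω | X ω = a} = 0 := le_antisymm (not_lt.mp hpos) measureReal_nonneg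
    rw [zero_mul, measureReal_mono_null (fun ω hω => hω.2) hnull]

variable [MeasurableSpace β] [MeasurableSingletonClass β]
  [MeasurableSpace γ] [MeasurableSingletonClass γ]

theorem hasSum_transitionProb_mul_measureReal [Countable γ] (hX : Measurable X)
    (hV : Measurable V) {p : Ω → Prop} (a : β) :
    HasSum (fun c => transitionProb μ X V a c * μ.real {ω | X ω = a ∧ p ω})
      (μ.real {ω | X ω = a ∧ p ω}) := by
  by_cases hpos : 0 < μ.real {ω | X ω = a}
  · have hsum : HasSum (fun c => transitionProb μ X V a c) 1 := by
      simp only [transitionProb, if_pos hpos]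
      rw [← div_self hpos.ne']
      exact (hasSum_measureReal_eq_and μ hV (hX (measurableSet_singleton a))).div_const _
    simpa using hsum.mul_right (μ.real {ω | X ω = a ∧ p ω})
  · have hnull : μ.real {ω | X ω = a} = 0 := le_antisymm (not_lt.mp hpos) measureReal_nonneg
    rw [measureReal_mono_null (fun ω hω => hω.1) hnull]
    simp

theorem hasSum_tsum_transitionProb_mul_measureReal_and [Countable β] [Countable γ]
    (hX : Measurable X) (hV : Measurable V) {p : Ω → Prop} (hp : MeasurableSet {ω | p ω}) :
    HasSum (fun c => ∑' a, transitionProb μ X V a c * μ.real {ω | X ω = a ∧ p ω})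
      (μ.real {ω | p ω}) :=
  hasSum_tsum_comm_of_nonneg
    (fun _ _ => mul_nonneg (transitionProb_nonneg _ _) measureReal_nonneg)
    (hasSum_transitionProb_mul_measureReal hX hV) (hasSum_measureReal_eq_and μ hX hp)

theorem hasSum_tsum_transitionProb_mul_measureReal_fiber [Countable β] {ι : Type*}
    [MeasurableSpace ι] [MeasurableSingletonClass ι] [Countable ι] {Z : Ω → ι} (hX : Measurable X)
    (hV : Measurable V) (hZ : Measurable Z) (c : γ) :
    HasSum (fun z => ∑' a, transitionProb μ X V a c * μ.real {ω | X ω = a ∧ Z ω = z})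
      (μ.real {ω | V ω = c}) := by
  refine hasSum_tsum_comm_of_nonneg
    (fun _ _ => mul_nonneg (transitionProb_nonneg _ _) measureReal_nonneg) (fun a => ?_)
    (hasSum_measureReal_and_eq μ hX (hV (measurableSet_singleton c)))
  rw [← transitionProb_mul_measureReal]
  exact (hasSum_measureReal_and_eq μ hZ (hX (measurableSet_singleton a))).mul_left _

end TransitionProb

theorem correction_terms_sum_to_zero_general
    {Ω 𝒮 : Type*} [MeasurableSpace Ω] [MeasurableSpace 𝒮] [MeasurableSingletonClass 𝒮]
    [Countable 𝒮]
    (μ : Measure Ω) [IsProbabilityMeasure μ]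
    (X V : Ω → ℤ) (Z : Ω → 𝒮)
    (hX : Measurable X) (hV : Measurable V) (hZ : Measurable Z)
    (s : 𝒮)
    (α : ℤ → ℤ → ℝ)
    (hα : ∀ a c : ℤ, α (a + c) a =
      if 0 < (μ {ω | X ω = a}).toReal
      then (μ {ω | V ω = c ∧ X ω = a}).toReal / (μ {ω | X ω = a}).toReal
      else 0)
    (δ : ℤ → ℝ)
    (hδ : ∀ c : ℤ, δ c = (1 / (μ {ω | Z ω = s}).toReal) *
      ∑' s' : {s' : 𝒮 // s' ≠ s},
        ((∑' a : ℤ, α (a + c) a * (μ {ω | X ω = a ∧ Z ω = (s' : 𝒮)}).toReal)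
          - (μ {ω | V ω = c ∧ Z ω = (s' : 𝒮)}).toReal)) :
    HasSum δ 0 := by
  have hκ : ∀ a c, α (a + c) a = transitionProb μ X V a c := hα
  simp only [hκ, ← measureReal_def] at hδ
  have hZs : MeasurableSet {ω | Z ω = s} := hZ (measurableSet_singleton s)
  have hinner : ∀ c, ∑' z : {z : 𝒮 // z ≠ s},
      ((∑' a, transitionProb μ X V a c * μ.real {ω | X ω = a ∧ Z ω = z})
        - μ.real {ω | V ω = c ∧ Z ω = z}) =
      μ.real {ω | V ω = c ∧ Z ω = s}
        - ∑' a, transitionProb μ X V a c * μ.real {ω | X ω = a ∧ Z ω = s} := by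
    intro c
    have hVc : MeasurableSet {ω | V ω = c} := hV (measurableSet_singleton c)
    have hbracket := (hasSum_tsum_transitionProb_mul_measureReal_fiber (μ := μ) hX hV hZ c).sub
      (hasSum_measureReal_and_eq μ hZ hVc)
    rw [sub_self] at hbracket
    rw [(hbracket.subtype_ne s).tsum_eq]
    ring
  have hsum := (hasSum_measureReal_eq_and μ hV hZs).sub
    (hasSum_tsum_transitionProb_mul_measureReal_and (μ := μ) hX hV hZs)
  rw [sub_self] at hsum
  rw [funext fun c => (hδ c).trans (congrArg _ (hinner c)),
    ← mul_zero (1 / μ.real {ω | Z ω = s})]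
  exact hsum.mul_left _

/-- In the setting of the conditional-velocity formula (position `X`,
velocity `V`, space configuration `Z` with values in a countable space `𝒮`, fixed `s`
with `P[Z = s] > 0`, transition probabilities `α(a+c, a) := P[V = c | X = a]` and
correction terms
`δ(c) := (1/P[Z=s]) ∑_{s' ≠ s} ( ∑_a α(a+c,a) P[X=a, Z=s'] − P[V=c, Z=s'] )`),
the correction terms sum to zero: `∑_{c ∈ ℤ} δ(c) = 0`, and in particular the family
`(δ(c))_{c ∈ ℤ}` is summable. -/
theorem correction_terms_sum_to_zero
    {Ω 𝒮 : Type*} [MeasurableSpace Ω] [MeasurableSpace 𝒮] [MeasurableSingletonClass 𝒮]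
    [Countable 𝒮]
    (μ : Measure Ω) [IsProbabilityMeasure μ]
    (X V : Ω → ℤ) (Z : Ω → 𝒮)
    (hX : Measurable X) (hV : Measurable V) (hZ : Measurable Z)
    (s : 𝒮) (hs : 0 < (μ {ω | Z ω = s}).toReal)
    (α : ℤ → ℤ → ℝ)
    (hα : ∀ a c : ℤ, α (a + c) a =
      if 0 < (μ {ω | X ω = a}).toReal
      then (μ {ω | V ω = c ∧ X ω = a}).toReal / (μ {ω | X ω = a}).toReal
      else 0)
    (δ : ℤ → ℝ)
    (hδ : ∀ c : ℤ, δ c = (1 / (μ {ω | Z ω = s}).toReal) *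
      ∑' s' : {s' : 𝒮 // s' ≠ s},
        ((∑' a : ℤ, α (a + c) a * (μ {ω | X ω = a ∧ Z ω = (s' : 𝒮)}).toReal)
          - (μ {ω | V ω = c ∧ Z ω = (s' : 𝒮)}).toReal)) :
    HasSum δ 0 :=
  correction_terms_sum_to_zero_general μ X V Z hX hV hZ s α hα δ hδ
end

section
/- For every Borel set B ⊆ ℝ, the set function Γ ↦ Δ(B, Γ) is a signed measure on 𝒮 which is absolutely continuous with respect to μ_Z; denoting by δ(B | s) its Radon–Nikodym derivative with respect to μ_Z evaluated at s, one has, for μ_Z-almost every s ∈ 𝒮: P_s[V ∈ B] = ∫_ℝ P[V ∈ B | X = x] μ_{X|s}(dx) + δ(B | s) = ∫_ℝ ∫_B α(v, x) dv μ_{X|s}(dx) + δ(B | s). -/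
open MeasureTheory ProbabilityTheory
open scoped ENNReal

/-!
The correction term is `δ(B | s) = P_s[V ∈ B] - ∫ P[V ∈ B | X = x] μ_{X|s}(dx)`. Since `P_s`
disintegrates `P` along `μ_Z`, both terms integrate against `μ_Z` to `P[V ∈ B]`: the first
directly, the second because `s ↦ μ_{X|s}` disintegrates `μ_X` and `P[V ∈ B | X = ·]` integrates
against `μ_X` to `P[V ∈ B]`. Hence `δ(B | ·)` has total integral zero, so its integral over `Γ`
is minus its integral over `𝒮 ∖ Γ`, which is `Δ(B, Γ)`. The density formula holds `μ_X`-a.e.,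
hence `μ_{X|s}`-a.e. for `μ_Z`-a.e. `s`.
-/

namespace MeasureTheory

variable {α β γ : Type*} [MeasurableSpace α] [MeasurableSpace β] [MeasurableSpace γ]

lemma Measure.eq_bind_of_apply_eq_lintegral {μ : Measure β} {ν : Measure α}
    {κ : α → Measure β} (hκ : Measurable κ)
    (h : ∀ A, MeasurableSet A → μ A = ∫⁻ a, κ a A ∂ν) : μ = ν.bind κ :=
  Measure.ext fun A hA => by rw [Measure.bind_apply hA hκ.aemeasurable, h A hA]

lemma Measure.lintegral_lintegral_map_eq_lintegral_map_comp (ν : Measure α) (κ : Kernel α β)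
    {X : β → γ} (hX : Measurable X) {f : γ → ℝ≥0∞} (hf : Measurable f) :
    ∫⁻ a, ∫⁻ x, f x ∂(κ a).map X ∂ν = ∫⁻ x, f x ∂(κ ∘ₘ ν).map X := by
  rw [Measure.map_comp _ _ hX, Measure.lintegral_bind (Kernel.aemeasurable _) hf.aemeasurable]
  simp only [Kernel.map_apply _ hX]

lemma Measure.ae_ae_map_of_ae_map_comp {ν : Measure α} {κ : Kernel α β} {X : β → γ}
    (hX : Measurable X) {p : γ → Prop} (h : ∀ᵐ x ∂(κ ∘ₘ ν).map X, p x) :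
    ∀ᵐ a ∂ν, ∀ᵐ x ∂(κ a).map X, p x := by
  rw [Measure.map_comp _ _ hX] at h
  simpa only [Kernel.map_apply _ hX] using Measure.ae_ae_of_ae_comp h

variable {ν : Measure α} {F G : α → ℝ≥0∞}

lemma integrable_toReal_sub_toReal (hF : AEMeasurable F ν) (hG : AEMeasurable G ν)
    (hFfin : ∫⁻ a, F a ∂ν ≠ ∞) (hGfin : ∫⁻ a, G a ∂ν ≠ ∞) :
    Integrable (fun a => (F a).toReal - (G a).toReal) ν :=
  (integrable_toReal_of_lintegral_ne_top hF hFfin).sub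
    (integrable_toReal_of_lintegral_ne_top hG hGfin)

lemma integral_toReal_sub_toReal_eq_zero (hF : AEMeasurable F ν) (hG : AEMeasurable G ν)
    (hfin : ∫⁻ a, F a ∂ν ≠ ∞) (hFG : ∫⁻ a, F a ∂ν = ∫⁻ a, G a ∂ν) :
    ∫ a, (F a).toReal - (G a).toReal ∂ν = 0 := by
  have hGfin : ∫⁻ a, G a ∂ν ≠ ∞ := hFG ▸ hfin
  rw [integral_sub (integrable_toReal_of_lintegral_ne_top hF hfin)
      (integrable_toReal_of_lintegral_ne_top hG hGfin),
    integral_toReal hF (ae_lt_top' hF hfin), integral_toReal hG (ae_lt_top' hG hGfin), hFG,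
    sub_self]

lemma setIntegral_eq_neg_setIntegral_compl_of_integral_eq_zero {f : α → ℝ} {s : Set α}
    (hf : Integrable f ν) (h₀ : ∫ a, f a ∂ν = 0) (hs : MeasurableSet s) :
    ∫ a in s, f a ∂ν = -∫ a in sᶜ, f a ∂ν := by
  linarith [integral_add_compl hs hf]

end MeasureTheory

theorem correction_term_is_radon_nikodym_derivative_general
    {Ω 𝒮 : Type*} [MeasurableSpace Ω] [MeasurableSpace 𝒮]
    (μ : Measure Ω) [IsProbabilityMeasure μ]
    (X V : Ω → ℝ) (Z : Ω → 𝒮)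
    (hX : Measurable X) (hV : Measurable V)
    -- `κ` is a regular conditional probability of `P` given `{Z = s}`
    (κ : 𝒮 → Measure Ω)
    (hκmeas : ∀ A : Set Ω, MeasurableSet A → Measurable fun s => κ s A)
    (hκ : ∀ A : Set Ω, MeasurableSet A → ∀ B' : Set 𝒮, MeasurableSet B' →
      μ (A ∩ Z ⁻¹' B') = ∫⁻ s in B', κ s A ∂(μ.map Z))
    -- `τ` is a regular conditional probability of `V` given `X`
    (τ : ℝ → Measure ℝ) (hτprob : ∀ x, IsProbabilityMeasure (τ x))
    (hτmeas : ∀ B : Set ℝ, MeasurableSet B → Measurable fun x => τ x B)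
    (hτ : ∀ B C : Set ℝ, MeasurableSet B → MeasurableSet C →
      μ (V ⁻¹' B ∩ X ⁻¹' C) = ∫⁻ x in C, τ x B ∂(μ.map X))
    -- `V` has a jointly measurable conditional density `α` given `X`
    (α : ℝ → ℝ → ℝ≥0∞)
    (hdens : ∀ᵐ x ∂(μ.map X), ∀ B : Set ℝ, MeasurableSet B →
      τ x B = ∫⁻ v in B, α v x ∂volume)
    (B : Set ℝ) (hB : MeasurableSet B) :
    ∃ (ξ : SignedMeasure 𝒮) (δB : 𝒮 → ℝ),
      -- `ξ` realizes the set function `Γ ↦ Δ(B, Γ)` as a signed measure on `𝒮`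
      (∀ Γ : Set 𝒮, MeasurableSet Γ →
        ξ Γ = ∫ s' in Γᶜ,
          ((∫ x, (τ x B).toReal ∂((κ s').map X)) - ((κ s') (V ⁻¹' B)).toReal)
            ∂(μ.map Z)) ∧
      -- which is absolutely continuous with respect to `μ_Z`
      ξ ≪ᵥ (μ.map Z).toENNRealVectorMeasure ∧
      -- `δB` is its Radon–Nikodym derivative with respect to `μ_Z`
      Integrable δB (μ.map Z) ∧
      (∀ Γ : Set 𝒮, MeasurableSet Γ → ξ Γ = ∫ s in Γ, δB s ∂(μ.map Z)) ∧
      -- and the conditional law of `V` given `{Z = s}` decomposes accordingly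
      (∀ᵐ s ∂(μ.map Z),
        ((κ s) (V ⁻¹' B)).toReal
            = (∫ x, (τ x B).toReal ∂((κ s).map X)) + δB s ∧
        ((κ s) (V ⁻¹' B)).toReal
            = (∫ x, (∫⁻ v in B, α v x ∂volume).toReal ∂((κ s).map X)) + δB s) := by
  set ν := μ.map Z
  let K : Kernel 𝒮 Ω := ⟨κ, Measure.measurable_of_measurable_coe κ hκmeas⟩
  have hK : ∀ s, K s = κ s := fun _ => rfl
  have hdisint : μ = K ∘ₘ ν :=
    Measure.eq_bind_of_apply_eq_lintegral K.measurable fun A hA => by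
      simpa [hK] using hκ A hA _ .univ
  set F : 𝒮 → ℝ≥0∞ := fun s => κ s (V ⁻¹' B)
  set G : 𝒮 → ℝ≥0∞ := fun s => ∫⁻ x, τ x B ∂(κ s).map X
  have hFm : Measurable F := hκmeas _ (hV hB)
  have hGm : Measurable G := (Measure.measurable_lintegral (hτmeas B hB)).comp
    ((Measure.measurable_map X hX).comp K.measurable)
  have hF : ∫⁻ s, F s ∂ν = μ (V ⁻¹' B) := by simpa using (hκ _ (hV hB) _ .univ).symm
  have hG : ∫⁻ s, G s ∂ν = μ (V ⁻¹' B) := calc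
    ∫⁻ s, G s ∂ν = ∫⁻ x, τ x B ∂μ.map X := by
      rw [hdisint]
      exact Measure.lintegral_lintegral_map_eq_lintegral_map_comp ν K hX (hτmeas B hB)
    _ = μ (V ⁻¹' B) := by simpa using (hτ B _ hB .univ).symm
  have hfin : ∫⁻ s, F s ∂ν ≠ ∞ := hF ▸ measure_ne_top μ _
  have hGint : ∀ s, ∫ x, (τ x B).toReal ∂(κ s).map X = (G s).toReal := fun s =>
    integral_toReal (hτmeas B hB).aemeasurable (.of_forall fun x => measure_lt_top _ _)
  set δB : 𝒮 → ℝ := fun s => (F s).toReal - (G s).toReal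
  have hδint : Integrable δB ν := integrable_toReal_sub_toReal hFm.aemeasurable
    hGm.aemeasurable hfin (hG ▸ hF ▸ hfin)
  have hδ₀ : ∫ s, δB s ∂ν = 0 :=
    integral_toReal_sub_toReal_eq_zero hFm.aemeasurable hGm.aemeasurable hfin (hF.trans hG.symm)
  have hdensκ : ∀ᵐ s ∂ν, ∀ᵐ x ∂(κ s).map X, τ x B = ∫⁻ v in B, α v x ∂volume :=
    Measure.ae_ae_map_of_ae_map_comp (κ := K) hX (hdisint ▸ hdens.mono fun x hx => hx B hB)
  refine ⟨ν.withDensityᵥ δB, δB, fun Γ hΓ => ?_, ν.withDensityᵥ_absolutelyContinuous δB, hδint,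
    fun Γ hΓ => withDensityᵥ_apply hδint hΓ, ?_⟩
  · rw [withDensityᵥ_apply hδint hΓ,
      setIntegral_eq_neg_setIntegral_compl_of_integral_eq_zero hδint hδ₀ hΓ, ← integral_neg]
    simp only [hGint, δB, F, neg_sub]
  · filter_upwards [hdensκ] with s hs
    have hα : ∫ x, (τ x B).toReal ∂(κ s).map X
        = ∫ x, (∫⁻ v in B, α v x ∂volume).toReal ∂(κ s).map X :=
      integral_congr_ae (hs.mono fun x hx => congrArg ENNReal.toReal hx)
    rw [← hα, hGint]
    exact ⟨by ring, by ring⟩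

/-- Let `X, V` be real random variables and `Z` a random variable with
values in a standard Borel space `𝒮`, on a probability space `(Ω, ℰ, P)`.  Let
`κ s = P_s` be a regular conditional probability of `P` given `{Z = s}` and
`τ x B = P[V ∈ B | X = x]` a regular conditional probability of `V` given `X`, admitting
a jointly measurable density `α`: `P[V ∈ B | X = x] = ∫_B α(v,x) dv` for `μ_X`-a.e. `x`.
For Borel `B ⊆ ℝ` and `Γ ⊆ 𝒮` set
`Δ(B, Γ) := ∫_{𝒮∖Γ} [ ∫ P[V ∈ B | X = x] μ_{X|s'}(dx) − P_{s'}[V ∈ B] ] μ_Z(ds')`.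
Then for every Borel `B`, the set function `Γ ↦ Δ(B, Γ)` is a signed measure on `𝒮`,
absolutely continuous with respect to `μ_Z`; and its Radon–Nikodym derivative
`δ(B | ·)` with respect to `μ_Z` satisfies, for `μ_Z`-almost every `s`:
`P_s[V ∈ B] = ∫ P[V ∈ B | X = x] μ_{X|s}(dx) + δ(B|s)
            = ∫ (∫_B α(v,x) dv) μ_{X|s}(dx) + δ(B|s)`. -/
theorem correction_term_is_radon_nikodym_derivative
    {Ω 𝒮 : Type*} [MeasurableSpace Ω] [MeasurableSpace 𝒮] [StandardBorelSpace 𝒮]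
    (μ : Measure Ω) [IsProbabilityMeasure μ]
    (X V : Ω → ℝ) (Z : Ω → 𝒮)
    (hX : Measurable X) (hV : Measurable V) (hZ : Measurable Z)
    -- `κ` is a regular conditional probability of `P` given `{Z = s}`
    (κ : 𝒮 → Measure Ω) (hκprob : ∀ s, IsProbabilityMeasure (κ s))
    (hκmeas : ∀ A : Set Ω, MeasurableSet A → Measurable fun s => κ s A)
    (hκ : ∀ A : Set Ω, MeasurableSet A → ∀ B' : Set 𝒮, MeasurableSet B' →
      μ (A ∩ Z ⁻¹' B') = ∫⁻ s in B', κ s A ∂(μ.map Z))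
    -- `τ` is a regular conditional probability of `V` given `X`
    (τ : ℝ → Measure ℝ) (hτprob : ∀ x, IsProbabilityMeasure (τ x))
    (hτmeas : ∀ B : Set ℝ, MeasurableSet B → Measurable fun x => τ x B)
    (hτ : ∀ B C : Set ℝ, MeasurableSet B → MeasurableSet C →
      μ (V ⁻¹' B ∩ X ⁻¹' C) = ∫⁻ x in C, τ x B ∂(μ.map X))
    -- `V` has a jointly measurable conditional density `α` given `X`
    (α : ℝ → ℝ → ℝ≥0∞) (hαmeas : Measurable fun q : ℝ × ℝ => α q.1 q.2)
    (hdens : ∀ᵐ x ∂(μ.map X), ∀ B : Set ℝ, MeasurableSet B →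
      τ x B = ∫⁻ v in B, α v x ∂volume)
    (B : Set ℝ) (hB : MeasurableSet B) :
    ∃ (ξ : SignedMeasure 𝒮) (δB : 𝒮 → ℝ),
      -- `ξ` realizes the set function `Γ ↦ Δ(B, Γ)` as a signed measure on `𝒮`
      (∀ Γ : Set 𝒮, MeasurableSet Γ →
        ξ Γ = ∫ s' in Γᶜ,
          ((∫ x, (τ x B).toReal ∂((κ s').map X)) - ((κ s') (V ⁻¹' B)).toReal)
            ∂(μ.map Z)) ∧
      -- which is absolutely continuous with respect to `μ_Z`
      ξ ≪ᵥ (μ.map Z).toENNRealVectorMeasure ∧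
      -- `δB` is its Radon–Nikodym derivative with respect to `μ_Z`
      Integrable δB (μ.map Z) ∧
      (∀ Γ : Set 𝒮, MeasurableSet Γ → ξ Γ = ∫ s in Γ, δB s ∂(μ.map Z)) ∧
      -- and the conditional law of `V` given `{Z = s}` decomposes accordingly
      (∀ᵐ s ∂(μ.map Z),
        ((κ s) (V ⁻¹' B)).toReal
            = (∫ x, (τ x B).toReal ∂((κ s).map X)) + δB s ∧
        ((κ s) (V ⁻¹' B)).toReal
            = (∫ x, (∫⁻ v in B, α v x ∂volume).toReal ∂((κ s).map X)) + δB s) :=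
  correction_term_is_radon_nikodym_derivative_general μ X V Z hX hV κ hκmeas hκ τ hτprob hτmeas hτ α
    hdens B hB
end

section
/- If |⟨x_k, v_j⟩| < 1 for all k, j ∈ {1, …, n}, then Â and B̂ do not commute: ÂB̂ ≠ B̂Â. -/
/-!
If `A B = B A`, then `A` maps the eigenline `ℂ ∙ v j` of `B` into itself, because `B` has simple
spectrum; so `v j` is an eigenvector of `A`. Since `A` has simple spectrum too, `v j` is then a
unit multiple of some `x k`, which forces `‖⟪x k, v j⟫‖ = 1`.
-/

open scoped InnerProductSpace

namespace OrthonormalBasis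

variable {ι 𝕜 E : Type*} [Fintype ι] [RCLike 𝕜] [NormedAddCommGroup E] [InnerProductSpace 𝕜 E]
  (b : OrthonormalBasis ι 𝕜 E) {c : ι → 𝕜} {T : E →ₗ[𝕜] E}

theorem exists_inner_ne_zero {w : E} (hw : w ≠ 0) : ∃ i, ⟪b i, w⟫_𝕜 ≠ 0 := by
  by_contra! h
  exact hw (by simpa [h] using (b.sum_repr' w).symm)

section Diagonal

variable (hT : ∀ ψ, T ψ = ∑ i, (c i * ⟪b i, ψ⟫_𝕜) • b i)
include hT

theorem inner_apply_of_diagonal (i : ι) (ψ : E) : ⟪b i, T ψ⟫_𝕜 = c i * ⟪b i, ψ⟫_𝕜 := by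
  rw [hT]
  exact b.orthonormal.inner_right_fintype _ i

theorem apply_self_of_diagonal (i : ι) : T (b i) = c i • b i :=
  InnerProductSpace.ext_inner_left_basis b.toBasis fun m => by
    rw [b.coe_toBasis, inner_apply_of_diagonal b hT, inner_smul_right]
    rcases eq_or_ne m i with rfl | hmi
    · rfl
    · simp [b.orthonormal.inner_eq_zero hmi]

theorem inner_eq_zero_of_apply_eq_smul {μ : 𝕜} {w : E} (hw : T w = μ • w) {i : ι}
    (hi : c i ≠ μ) : ⟪b i, w⟫_𝕜 = 0 := by
  have h : c i * ⟪b i, w⟫_𝕜 = μ * ⟪b i, w⟫_𝕜 := by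
    rw [← inner_apply_of_diagonal b hT, hw, inner_smul_right]
  exact (mul_eq_mul_right_iff.mp h).resolve_left hi

theorem eq_inner_smul_of_apply_eq_smul (hc : Function.Injective c) {w : E} {j : ι}
    (hw : T w = c j • w) : w = ⟪b j, w⟫_𝕜 • b j := by
  conv_lhs => rw [← b.sum_repr' w]
  refine Finset.sum_eq_single j (fun i _ hij => ?_) (by simp)
  rw [inner_eq_zero_of_apply_eq_smul b hT hw (hc.ne hij), zero_smul]

theorem exists_eq_inner_smul_of_apply_eq_smul (hc : Function.Injective c) {μ : 𝕜} {w : E}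
    (hw : T w = μ • w) (hw₀ : w ≠ 0) : ∃ i, w = ⟪b i, w⟫_𝕜 • b i := by
  obtain ⟨i, hi⟩ := b.exists_inner_ne_zero hw₀
  have hμ : c i = μ := by
    by_contra h
    exact hi (inner_eq_zero_of_apply_eq_smul b hT hw h)
  exact ⟨i, eq_inner_smul_of_apply_eq_smul b hT hc (hμ ▸ hw)⟩

end Diagonal

end OrthonormalBasis

theorem non_orthogonal_bases_operators_do_not_commute_general
    {H : Type*} [NormedAddCommGroup H] [InnerProductSpace ℂ H]
    {n : ℕ} (hn : 0 < n)
    (x v : OrthonormalBasis (Fin n) ℂ H)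
    (a b : Fin n → ℝ) (ha : Function.Injective a) (hb : Function.Injective b)
    (A B : H →ₗ[ℂ] H)
    (hA : ∀ ψ : H, A ψ = ∑ k, ((a k : ℂ) * inner ℂ (x k) ψ) • x k)
    (hB : ∀ ψ : H, B ψ = ∑ j, ((b j : ℂ) * inner ℂ (v j) ψ) • v j)
    (hover : ∀ k j, ‖(inner ℂ (x k) (v j) : ℂ)‖ < 1) :
    A ∘ₗ B ≠ B ∘ₗ A := by
  intro hAB
  let j : Fin n := ⟨0, hn⟩
  have hb' : Function.Injective (fun i => (b i : ℂ)) := Complex.ofReal_injective.comp hb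
  have ha' : Function.Injective (fun i => (a i : ℂ)) := Complex.ofReal_injective.comp ha
  have hBAv : B (A (v j)) = (b j : ℂ) • A (v j) := by
    rw [← LinearMap.comp_apply, ← hAB, LinearMap.comp_apply,
      v.apply_self_of_diagonal hB, map_smul]
  have hAv : A (v j) = ⟪v j, A (v j)⟫_ℂ • v j :=
    v.eq_inner_smul_of_apply_eq_smul hB hb' hBAv
  obtain ⟨k, hk⟩ := x.exists_eq_inner_smul_of_apply_eq_smul hA ha' hAv (v.orthonormal.ne_zero j)
  have hnorm : ‖v j‖ = ‖⟪x k, v j⟫_ℂ‖ := by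
    conv_lhs => rw [hk]
    rw [norm_smul, x.orthonormal.1 k, mul_one]
  exact (hover k j).ne (hnorm ▸ v.orthonormal.1 j)

/-- Let `H` be a finite-dimensional complex Hilbert space of
dimension `n ≥ 1` with two orthonormal bases `(x k)` and `(v j)`, let
`a 1, …, a n` and `b 1, …, b n` be two families of pairwise distinct real numbers, and
let `Â = ∑ k, a k ⟨x k, ·⟩ x k` and `B̂ = ∑ j, b j ⟨v j, ·⟩ v j` be the corresponding
self-adjoint operators, diagonal in the bases `(x k)` and `(v j)` respectively.
If `|⟨x k, v j⟩| < 1` for all `k, j`, then `Â` and `B̂` do not commute: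
`Â B̂ ≠ B̂ Â`. -/
theorem non_orthogonal_bases_operators_do_not_commute
    {H : Type*} [NormedAddCommGroup H] [InnerProductSpace ℂ H]
    [FiniteDimensional ℂ H] {n : ℕ} (hn : 0 < n)
    (x v : OrthonormalBasis (Fin n) ℂ H)
    (a b : Fin n → ℝ) (ha : Function.Injective a) (hb : Function.Injective b)
    (A B : H →ₗ[ℂ] H)
    (hA : ∀ ψ : H, A ψ = ∑ k, ((a k : ℂ) * inner ℂ (x k) ψ) • x k)
    (hB : ∀ ψ : H, B ψ = ∑ j, ((b j : ℂ) * inner ℂ (v j) ψ) • v j)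
    (hover : ∀ k j, ‖(inner ℂ (x k) (v j) : ℂ)‖ < 1) :
    A ∘ₗ B ≠ B ∘ₗ A :=
  non_orthogonal_bases_operators_do_not_commute_general hn x v a b ha hb A B hA hB hover
end
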